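/- Let ν : ℝ → ℝ be continuous and k₀ ∈ ℝ, and suppose that (v−u)·ν(u+v−k₀) − (k₀−u)·ν(u) + (k₀−v)·ν(v) = 0 for all u, v ∈ ℝ. Then ν is affine: there exist ν₀, ν₁ ∈ ℝ such that ν(k) = ν₁ k + ν₀ for all k ∈ ℝ. -/

import Mathlib

/-!
Substituting `u = k₀ + a`, `v = k₀ + b` turns the equation into
`(b - a) g(a + b) = b g(b) - a g(a)` for `g a = ν (k₀ + a)`, which no longer involves `k₀`.
Taking `b = -a` shows that `g - g 0` is odd; comparing the instances `(a, b)` and `(a, -b)`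
then gives `(a - b) (g(a + b) - g 0) = (a + b) (g(a - b) - g 0)`, and `a - b = 1` makes `g` affine.
-/

section SubMulMapAdd

variable {R : Type*} [CommRing R] {g : R → R}

theorem map_neg_add_map_of_sub_mul_map_add [NoZeroDivisors R]
    (hg : ∀ a b, (b - a) * g (a + b) = b * g b - a * g a) (a : R) :
    g (-a) + g a = 2 * g 0 := by
  rcases eq_or_ne a 0 with rfl | ha
  · rw [neg_zero, two_mul]
  · have h := hg a (-a)
    rw [add_neg_cancel] at h
    have : a * (g (-a) + g a - 2 * g 0) = 0 := by linear_combination h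
    exact sub_eq_zero.mp ((mul_eq_zero.mp this).resolve_left ha)

theorem sub_mul_map_add_sub_map_zero_of_sub_mul_map_add [NoZeroDivisors R]
    (hg : ∀ a b, (b - a) * g (a + b) = b * g b - a * g a) (a b : R) :
    (a - b) * (g (a + b) - g 0) = (a + b) * (g (a - b) - g 0) := by
  have hab := hg a b
  have hanb := hg a (-b)
  rw [← sub_eq_add_neg] at hanb
  linear_combination hanb - hab - b * map_neg_add_map_of_sub_mul_map_add hg b

end SubMulMapAdd

theorem eq_affine_of_sub_mul_map_add {K : Type*} [Field K] [NeZero (2 : K)] {g : K → K}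
    (hg : ∀ a b, (b - a) * g (a + b) = b * g b - a * g a) (x : K) :
    g x = (g 1 - g 0) * x + g 0 := by
  have h := sub_mul_map_add_sub_map_zero_of_sub_mul_map_add hg ((x + 1) / 2) ((x - 1) / 2)
  rw [show (x + 1) / 2 - (x - 1) / 2 = 1 by field_simp; ring,
    show (x + 1) / 2 + (x - 1) / 2 = x by field_simp; ring] at h
  linear_combination h

theorem affine_of_functional_equation_general
    (ν : ℝ → ℝ) (k₀ : ℝ)
    (h : ∀ u v : ℝ,
      (v - u) * ν (u + v - k₀) - (k₀ - u) * ν u + (k₀ - v) * ν v = 0) :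
    ∃ ν₀ ν₁ : ℝ, ∀ k : ℝ, ν k = ν₁ * k + ν₀ := by
  have hg : ∀ a b, (b - a) * ν (k₀ + (a + b)) = b * ν (k₀ + b) - a * ν (k₀ + a) := fun a b => by
    have hab := h (k₀ + a) (k₀ + b)
    rw [show k₀ + a + (k₀ + b) - k₀ = k₀ + (a + b) by ring] at hab
    linear_combination hab
  have hk := eq_affine_of_sub_mul_map_add (g := fun a => ν (k₀ + a)) hg
  refine ⟨ν k₀ - (ν (k₀ + 1) - ν k₀) * k₀, ν (k₀ + 1) - ν k₀, fun k => ?_⟩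
  simp only [add_zero] at hk
  rw [← add_sub_cancel k₀ k, hk (k - k₀)]
  ring

/-- If `ν : ℝ → ℝ` is continuous and satisfies
`(v−u)ν(u+v−k₀) − (k₀−u)ν(u) + (k₀−v)ν(v) = 0` for all `u, v ∈ ℝ` (for a fixed `k₀`),
then `ν` is affine. -/
theorem affine_of_functional_equation
    (ν : ℝ → ℝ) (hν : Continuous ν) (k₀ : ℝ)
    (h : ∀ u v : ℝ,
      (v - u) * ν (u + v - k₀) - (k₀ - u) * ν u + (k₀ - v) * ν v = 0) :
    ∃ ν₀ ν₁ : ℝ, ∀ k : ℝ, ν k = ν₁ * k + ν₀ :=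
  affine_of_functional_equation_general ν k₀ h
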